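/- Every root class 𝒦 contains all finitely generated torsion-free nilpotent groups, or there exists a prime p such that 𝒦 contains all finite p-groups. -/

import Mathlib

/-! Root classes are closed under extensions: take `C = 1` in the root condition. Pick `g ≠ 1` in a
nontrivial member of `K`.

If `g` has finite order, `K` contains a group of prime order `p`, and every finite `p`-group is an
iterated central extension of groups of order `p`.

Otherwise `K` contains `⟨g⟩ ≅ ℤ`, hence `ℤⁿ` and every finitely generated torsion-free abelian
group. A finitely generated torsion-free nilpotent group `G` is an extension of `Z(G)` by
`G ⧸ Z(G)`. The quotient is again torsion-free, because roots of central elements are central, and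
has smaller class; the center is finitely generated because every subgroup of a finitely generated
nilpotent group is (Mal'cev). -/

open Pointwise

universe u

/-- A class of groups in universe `u`. -/
abbrev GroupClass : Type (u + 1) := ∀ (G : Type u) [Group G], Prop

/-- A class of groups is invariant under isomorphism. -/
def GroupClass.IsoInvariant (K : GroupClass.{u}) : Prop :=
  ∀ (G H : Type u) [Group G] [Group H], G ≃* H → K G → K H

/-- A class of groups is closed under taking subgroups. -/
def GroupClass.SubgroupClosed (K : GroupClass.{u}) : Prop :=
  ∀ (G : Type u) [Group G], K G → ∀ H : Subgroup G, K H

/-- A class of groups is closed under binary direct products. -/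
def GroupClass.ProdClosed (K : GroupClass.{u}) : Prop :=
  ∀ (A B : Type u) [Group A] [Group B], K A → K B → K (A × B)

/-- `K` is a root class: it is an isomorphism-invariant class of groups containing a
nontrivial group, closed under subgroups and finite direct products, and satisfying the
root condition on subnormal chains `C ⊴ B ⊴ A` of length two. -/
def IsRootClass (K : GroupClass.{u}) : Prop :=
  K.IsoInvariant ∧
  (∃ (G : Type u) (_ : Group G), Nontrivial G ∧ K G) ∧
  K.SubgroupClosed ∧
  K.ProdClosed ∧
  (∀ (A : Type u) [Group A] (B : Subgroup A) [B.Normal] (C : Subgroup B) [C.Normal],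
    K (A ⧸ B) → K ((B : Type u) ⧸ C) →
    ∃ (D : Subgroup A) (hD : D.Normal), D ≤ C.map B.subtype ∧ (letI := hD; K (A ⧸ D)))

/-- A group `G` is `K`-residual: every nonidentity element is excluded from some normal
subgroup with quotient in `K`. -/
def KResidual (K : GroupClass.{u}) (G : Type u) [Group G] : Prop :=
  ∀ g : G, g ≠ 1 → ∃ (N : Subgroup G) (hN : N.Normal),
    (letI := hN; K (G ⧸ N)) ∧ g ∉ N

/-- A subgroup `H` of `A` is `K`-closed: every element of `A` outside `H` avoids the set
`N * H` for some normal subgroup `N` of `A` with `A ⧸ N ∈ K`. -/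
def KClosed (K : GroupClass.{u}) {A : Type u} [Group A] (H : Subgroup A) : Prop :=
  ∀ a : A, a ∉ H → ∃ (N : Subgroup A) (hN : N.Normal),
    (letI := hN; K (A ⧸ N)) ∧ a ∉ (N : Set A) * (H : Set A)

open Subgroup
open scoped commutatorElement

namespace Subgroup

variable {G G' : Type*} [Group G] [Group G']

theorem FG.map {H : Subgroup G} (hH : H.FG) (f : G →* G') : (H.map f).FG := by
  obtain ⟨S, hS, hSfin⟩ := (fg_iff H).mp hH
  exact (fg_iff _).mpr ⟨f '' S, by rw [← hS, MonoidHom.map_closure], hSfin.image f⟩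

theorem exists_finite_subset_map_closure_eq (f : G →* G') {H : Subgroup G} (hH : (H.map f).FG) :
    ∃ T ⊆ (H : Set G), T.Finite ∧ (closure T).map f = H.map f := by
  obtain ⟨U, hU, hUfin⟩ := (fg_iff _).mp hH
  have hUH : U ⊆ f '' H := fun u hu => mem_map.mp (hU ▸ subset_closure hu)
  obtain ⟨T, hTH, hTfin, hTU⟩ := Set.exists_subset_image_finite_and.mp ⟨U, hUH, hUfin, rfl⟩
  exact ⟨T, hTH, hTfin, by rw [MonoidHom.map_closure, ← hTU, hU]⟩

theorem fg_of_fg_map_of_fg_inf_ker (f : G →* G') {H : Subgroup G} (hmap : (H.map f).FG)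
    (hker : (H ⊓ f.ker).FG) : H.FG := by
  obtain ⟨T, hTH, hTfin, hT⟩ := exists_finite_subset_map_closure_eq f hmap
  obtain ⟨T', hT', hT'fin⟩ := (fg_iff _).mp hker
  refine (fg_iff H).mpr ⟨T ∪ T', le_antisymm ?_ ?_, hTfin.union hT'fin⟩
  · rw [closure_le]
    exact Set.union_subset hTH fun t ht => (mem_inf.mp (hT' ▸ subset_closure ht : t ∈ H ⊓ f.ker)).1
  · intro h hh
    obtain ⟨t, ht, hth⟩ : f h ∈ (closure T).map f := hT ▸ mem_map_of_mem f hh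
    have htH : t ∈ H := (closure_le H).mpr hTH ht
    have hker : t⁻¹ * h ∈ H ⊓ f.ker := mem_inf.mpr ⟨mul_mem (inv_mem htH) hh, by simp [hth]⟩
    rw [← mul_inv_cancel_left t h]
    exact mul_mem (closure_mono Set.subset_union_left ht)
      (closure_mono Set.subset_union_right (hT' ▸ hker))

theorem normal_of_le_center {N : Subgroup G} (h : N ≤ center G) : N.Normal :=
  ⟨fun n hn g => by rwa [mem_center_iff.mp (h hn) g, mul_inv_cancel_right]⟩

theorem commutator_mem_of_mem_closure_left {S : Set G} {b : G} {P : Subgroup G}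
    (hcent : ∀ a ∈ closure S, ⁅a, b⁆ ∈ center G) (hS : ∀ s ∈ S, ⁅s, b⁆ ∈ P) {a : G}
    (ha : a ∈ closure S) : ⁅a, b⁆ ∈ P := by
  induction ha using closure_induction with
  | mem s hs => exact hS s hs
  | one => simp
  | mul x y _ hy ihx ihy =>
    rw [commutatorElement_mul_left_eq_conj_mul, mem_center_iff.mp (hcent y hy) x,
      mul_inv_cancel_right]
    exact mul_mem ihy ihx
  | inv x hx ihx =>
    rw [commutatorElement_inv_left, ← commutatorElement_inv,
      mem_center_iff.mp (inv_mem (hcent x hx)) x⁻¹, inv_mul_cancel_right]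
    exact inv_mem ihx

/-- Central commutators are bilinear, so they are generated by commutators of generators. -/
theorem commutator_closure_le_closure_image2 {S T : Set G}
    (h : ⁅closure S, closure T⁆ ≤ center G) :
    ⁅closure S, closure T⁆ ≤ closure (Set.image2 (⁅·, ·⁆) S T) := by
  rw [commutator_le]
  intro a ha b hb
  refine commutator_mem_of_mem_closure_left
    (fun a' ha' => h (commutator_mem_commutator ha' hb)) (fun s hs => ?_) ha
  rw [← commutatorElement_inv]
  refine inv_mem (commutator_mem_of_mem_closure_left (fun b' hb' => ?_) (fun t ht => ?_) hb)
  · rw [← commutatorElement_inv]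
    exact inv_mem (h (commutator_mem_commutator (subset_closure hs) hb'))
  · rw [← commutatorElement_inv]
    exact inv_mem (subset_closure (Set.mem_image2_of_mem hs ht))

theorem fg_lowerCentralSeries_succ_of_le_center [Group.FG G] {n : ℕ}
    (hcent : (⊤ : Subgroup G).lowerCentralSeries (n + 1) ≤ center G)
    (hfg : (((⊤ : Subgroup G).lowerCentralSeries n).map
      (QuotientGroup.mk' ((⊤ : Subgroup G).lowerCentralSeries (n + 1)))).FG) :
    ((⊤ : Subgroup G).lowerCentralSeries (n + 1)).FG := by
  set W := (⊤ : Subgroup G).lowerCentralSeries (n + 1)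
  obtain ⟨S, hS, hSfin⟩ := Group.fg_iff.mp ‹Group.FG G›
  obtain ⟨T, hT, hTfin, hTW⟩ := exists_finite_subset_map_closure_eq (QuotientGroup.mk' W) hfg
  have hTS : ⁅closure T, closure S⁆ ≤ W :=
    commutator_mono ((closure_le _).mpr hT) le_top
  refine (fg_iff W).mpr ⟨Set.image2 (⁅·, ·⁆) T S, le_antisymm ?_ ?_, hTfin.image2 _ hSfin⟩
  · rw [closure_le]
    rintro _ ⟨t, ht, s, -, rfl⟩
    exact commutator_mem_commutator (hT ht) (mem_top s)
  · refine commutator_le.mpr fun a ha g _ => ?_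
    obtain ⟨t, ht, hta⟩ : (a : G ⧸ W) ∈ (closure T).map (QuotientGroup.mk' W) :=
      hTW ▸ mem_map_of_mem _ ha
    have hw : t⁻¹ * a ∈ W := QuotientGroup.eq.mp hta
    -- `a = t * w` with `w = t⁻¹ * a` central
    have hag : ⁅a, g⁆ = ⁅t, g⁆ := by
      rw [← mul_inv_cancel_left t a, commutatorElement_mul_left_eq_conj_mul,
        commutatorElement_eq_one_iff_commute.mpr (mem_center_iff.mp (hcent hw) g).symm,
        mul_one, mul_inv_cancel, one_mul]
    rw [hag]
    refine commutator_closure_le_closure_image2 (hTS.trans hcent) ?_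
    exact commutator_mem_commutator ht (hS ▸ mem_top g)

end Subgroup

def Group.IsNoetherian (G : Type*) [Group G] : Prop :=
  ∀ H : Subgroup G, H.FG

namespace Group.IsNoetherian

variable {G : Type*} [Group G]

theorem of_normal_of_quotient (N : Subgroup G) [N.Normal] (hN : IsNoetherian N)
    (hQ : IsNoetherian (G ⧸ N)) : IsNoetherian G := fun H =>
  fg_of_fg_map_of_fg_inf_ker (QuotientGroup.mk' N) (hQ _) <| by
    rw [QuotientGroup.ker_mk', ← subgroupOf_map_subtype]
    exact (hN _).map N.subtype

open scoped IsMulCommutative in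
theorem of_isMulCommutative [IsMulCommutative G] [Group.FG G] : IsNoetherian G := fun H => by
  have : Module.Finite ℤ (Additive G) := Module.Finite.iff_addGroup_fg.mpr inferInstance
  have hfg := IsNoetherian.noetherian (R := ℤ) (AddSubgroup.toIntSubmodule H.toAddSubgroup)
  rw [Submodule.fg_iff_addSubgroup_fg] at hfg
  rw [fg_iff_add_fg]
  simpa using hfg

theorem of_lowerCentralSeries_eq_bot [Group.FG G] {n : ℕ}
    (h : (⊤ : Subgroup G).lowerCentralSeries n = ⊥) : IsNoetherian G := by
  induction n generalizing G with
  | zero =>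
    intro H
    rw [le_bot_iff.mp (le_top.trans (le_of_eq h) : H ≤ ⊥)]
    exact FG.bot
  | succ n ih =>
    set W := (⊤ : Subgroup G).lowerCentralSeries n
    have hW : W ≤ center G := commutator_top_right_eq_bot_iff_le_center.mp h
    have hQ : IsNoetherian (G ⧸ W) := ih <| by
      rw [← map_top_of_surjective _ (QuotientGroup.mk'_surjective W), ← map_lowerCentralSeries,
        QuotientGroup.map_mk'_self]
    have : Group.FG W := by
      rw [fg_iff_subgroup_fg]
      cases n with
      | zero => exact fg_def.mp ‹_›
      | succ m => exact fg_lowerCentralSeries_succ_of_le_center hW (hQ _)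
    have : IsMulCommutative W := ⟨⟨fun a b => Subtype.ext (mem_center_iff.mp (hW a.2) b).symm⟩⟩
    exact of_normal_of_quotient W of_isMulCommutative hQ

theorem of_isNilpotent [Group.FG G] [Group.IsNilpotent G] : IsNoetherian G :=
  of_lowerCentralSeries_eq_bot Subgroup.lowerCentralSeries_nilpotencyClass

end Group.IsNoetherian

/-- For noncommutative groups this is weaker than `IsMulTorsionFree`, which asks for unique
roots. -/
def Monoid.IsTorsionFree (G : Type*) [Monoid G] : Prop :=
  ∀ g : G, g ≠ 1 → ¬IsOfFinOrder g

namespace Monoid.IsTorsionFree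

variable {G : Type*} [Group G]

theorem eq_one_of_pow_eq_one (hG : IsTorsionFree G) {x : G} {n : ℕ} (hn : n ≠ 0)
    (hx : x ^ n = 1) : x = 1 :=
  by_contra fun h1 => hG x h1 (isOfFinOrder_iff_pow_eq_one.mpr ⟨n, Nat.pos_of_ne_zero hn, hx⟩)

theorem subgroup (hG : IsTorsionFree G) (H : Subgroup G) : IsTorsionFree H := fun h h1 hfin =>
  hG h (by simpa using h1) ((Submonoid.isOfFinOrder_coe (H := H.toSubmonoid)).mpr hfin)

end Monoid.IsTorsionFree

theorem commutatorElement_pow_left {G : Type*} [Group G] {u v : G} (h : Commute u ⁅u, v⁆)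
    (n : ℕ) : ⁅u ^ n, v⁆ = ⁅u, v⁆ ^ n := by
  induction n with
  | zero => simp
  | succ n ih =>
    rw [pow_succ', commutatorElement_mul_left_eq_conj_mul, ih, (h.pow_right n).eq,
      mul_inv_cancel_right, ← pow_succ]

namespace Subgroup

variable {G : Type*} [Group G]

theorem mem_upperCentralSeries_of_pow_mem_of_mem_succ (hG : Monoid.IsTorsionFree G) {n : ℕ}
    (hn : n ≠ 0) {i : ℕ} {x : G} (hx : x ∈ upperCentralSeries G (i + 1))
    (hxn : x ^ n ∈ upperCentralSeries G i) : x ∈ upperCentralSeries G i := by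
  induction i generalizing x with
  | zero =>
    rw [upperCentralSeries_zero, mem_bot] at hxn ⊢
    exact hG.eq_one_of_pow_eq_one hn hxn
  | succ i ih =>
    refine mem_upperCentralSeries_succ_iff.mpr fun y => ih ?_ ?_
    · exact mem_upperCentralSeries_succ_iff.mp hx y
    · -- modulo `ζ_i` the commutator `⁅x, y⁆` is central, so `⁅x, y⁆ ^ n ≡ ⁅x ^ n, y⁆`
      let π := QuotientGroup.mk' (upperCentralSeries G i)
      have hcomm : Commute (π x) ⁅π x, π y⁆ := by
        have : π ⁅x, y⁆ ∈ center _ :=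
          (upperCentralSeriesStep_eq_comap_center (upperCentralSeries G i)).le
            (mem_upperCentralSeries_succ_iff.mp hx y)
        rw [map_commutatorElement] at this
        exact mem_center_iff.mp this (π x)
      rw [← QuotientGroup.eq_one_iff]
      change π (⁅x, y⁆ ^ n) = 1
      rw [map_pow, map_commutatorElement,
        ← commutatorElement_pow_left hcomm, ← map_pow, ← map_commutatorElement]
      exact (QuotientGroup.eq_one_iff _).mpr (mem_upperCentralSeries_succ_iff.mp hxn y)

theorem mem_upperCentralSeries_of_pow_mem [Group.IsNilpotent G] (hG : Monoid.IsTorsionFree G)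
    {n : ℕ} (hn : n ≠ 0) {i : ℕ} {x : G} (hxn : x ^ n ∈ upperCentralSeries G i) :
    x ∈ upperCentralSeries G i := by
  suffices ∀ j, x ∈ upperCentralSeries G (i + j) → x ∈ upperCentralSeries G i by
    refine this (Group.nilpotencyClass G) (upperCentralSeries_mono G (Nat.le_add_left _ _) ?_)
    rw [upperCentralSeries_nilpotencyClass]
    exact mem_top x
  intro j
  induction j with
  | zero => exact id
  | succ j ih =>
    exact fun hx => ih (mem_upperCentralSeries_of_pow_mem_of_mem_succ hG hn hx
      (upperCentralSeries_mono G (Nat.le_add_right i j) hxn))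

end Subgroup

theorem Monoid.IsTorsionFree.quotient_center {G : Type*} [Group G] [Group.IsNilpotent G]
    (hG : Monoid.IsTorsionFree G) : Monoid.IsTorsionFree (G ⧸ center G) := by
  intro q hq hfin
  obtain ⟨x, rfl⟩ := QuotientGroup.mk_surjective q
  obtain ⟨n, hn, hxn⟩ := isOfFinOrder_iff_pow_eq_one.mp hfin
  have hxn : x ^ n ∈ Subgroup.upperCentralSeries G 1 := by
    rw [Subgroup.upperCentralSeries_one, ← QuotientGroup.eq_one_iff, QuotientGroup.mk_pow, hxn]
  refine hq ((QuotientGroup.eq_one_iff x).mpr ?_)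
  rw [← Subgroup.upperCentralSeries_one]
  exact Subgroup.mem_upperCentralSeries_of_pow_mem hG hn.ne' hxn

theorem IsPGroup.exists_le_center_card_eq {G : Type*} [Group G] [Finite G] [Nontrivial G]
    {p : ℕ} [Fact p.Prime] (hG : IsPGroup p G) :
    ∃ N : Subgroup G, N ≤ center G ∧ Nat.card N = p := by
  have := hG.center_nontrivial
  have hdvd : p ∣ Nat.card (center G) :=
    ((hG.to_subgroup _).card_eq_or_dvd).resolve_left Finite.one_lt_card.ne'
  obtain ⟨c, hc⟩ := exists_prime_orderOf_dvd_card' p hdvd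
  exact ⟨zpowers (c : G), zpowers_le.mpr c.2, by rw [Nat.card_zpowers, orderOf_coe, hc]⟩

namespace IsRootClass

variable {K : GroupClass.{u}}

theorem of_mulEquiv (hK : IsRootClass K) {G H : Type u} [Group G] [Group H] (e : G ≃* H)
    (hG : K G) : K H :=
  hK.1 G H e hG

theorem subgroup (hK : IsRootClass K) {G : Type u} [Group G] (hG : K G) (H : Subgroup G) :
    K H :=
  hK.2.2.1 G hG H

theorem prod (hK : IsRootClass K) {A B : Type u} [Group A] [Group B] (hA : K A) (hB : K B) :
    K (A × B) :=
  hK.2.2.2.1 A B hA hB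

theorem of_subsingleton (hK : IsRootClass K) (G : Type u) [Group G] [Subsingleton G] : K G := by
  obtain ⟨W, _, -, hW⟩ := hK.2.1
  have : Unique G := uniqueOfSubsingleton 1
  exact hK.of_mulEquiv MulEquiv.ofUnique (hK.subgroup hW ⊥)

theorem of_normal_of_quotient (hK : IsRootClass K) {G : Type u} [Group G] (N : Subgroup G)
    [N.Normal] (hN : K N) (hQ : K (G ⧸ N)) : K G := by
  obtain ⟨D, _, hD, hKD⟩ :=
    hK.2.2.2.2 G N ⊥ hQ (hK.of_mulEquiv (QuotientGroup.quotientBot (G := N)).symm hN)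
  rw [Subgroup.map_bot, le_bot_iff] at hD
  subst hD
  exact hK.of_mulEquiv QuotientGroup.quotientBot hKD

theorem of_isPGroup (hK : IsRootClass K) {p : ℕ} [Fact p.Prime] {C : Type u} [Group C]
    (hC : K C) (hCp : Nat.card C = p) {G : Type u} [Group G] [Finite G] (hG : IsPGroup p G) :
    K G := by
  induction h : Nat.card G using Nat.strong_induction_on generalizing G with
  | _ n ih =>
    rcases subsingleton_or_nontrivial G with _ | _
    · exact hK.of_subsingleton G
    obtain ⟨N, hNcent, hNp⟩ := hG.exists_le_center_card_eq
    have := normal_of_le_center hNcent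
    have hlt : Nat.card (G ⧸ N) < n := by
      rw [← h, card_eq_card_quotient_mul_card_subgroup N, hNp]
      exact lt_mul_of_one_lt_right Nat.card_pos (Fact.out : p.Prime).one_lt
    exact hK.of_normal_of_quotient N (hK.of_mulEquiv (mulEquivOfPrimeCardEq hCp hNp) hC)
      (ih _ hlt (hG.to_quotient N) rfl)

theorem pi_fin (hK : IsRootClass K) {Z : Type u} [Group Z] (hZ : K Z) : ∀ n, K (Fin n → Z)
  | 0 => hK.of_subsingleton _
  | n + 1 =>
    hK.of_mulEquiv
      ({ (Fin.consEquiv fun _ => Z).symm with map_mul' := fun _ _ => rfl } :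
        (Fin (n + 1) → Z) ≃* Z × (Fin n → Z)).symm
      (hK.prod hZ (hK.pi_fin hZ n))

open scoped IsMulCommutative in
theorem of_isMulCommutative (hK : IsRootClass K) {Z : Type u} [Group Z] [IsCyclic Z]
    [Infinite Z] (hZ : K Z) {A : Type u} [Group A] [IsMulCommutative A] [Group.FG A]
    (hA : Monoid.IsTorsionFree A) : K A := by
  have : IsMulTorsionFree A := .of_not_isOfFinOrder fun a => hA a
  have : Module.Finite ℤ (Additive A) := Module.Finite.iff_addGroup_fg.mpr inferInstance
  let e : A ≃* (Fin _ → Z) :=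
    (AddEquiv.toMultiplicativeRight (Module.finBasis ℤ (Additive A)).equivFun.toAddEquiv).trans
      ((MulEquiv.funMultiplicative _ _).trans (MulEquiv.piCongrRight fun _ => intCyclicMulEquiv))
  exact hK.of_mulEquiv e.symm (hK.pi_fin hZ _)

theorem of_isNilpotent (hK : IsRootClass K) {Z : Type u} [Group Z] [IsCyclic Z] [Infinite Z]
    (hZ : K Z) {G : Type u} [Group G] [Group.FG G] [Group.IsNilpotent G]
    (hG : Monoid.IsTorsionFree G) : K G := by
  revert hG
  refine Group.nilpotent_center_quotient_ind
    (P := fun G _ _ => [Group.FG G] → Monoid.IsTorsionFree G → K G) G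
    (fun G _ _ _ _ => hK.of_subsingleton G) (fun G _ _ ih _ hG => ?_)
  have : Group.FG (center G) :=
    (Group.fg_iff_subgroup_fg _).mpr (Group.IsNoetherian.of_isNilpotent _)
  exact hK.of_normal_of_quotient (center G) (hK.of_isMulCommutative hZ (hG.subgroup _))
    (ih hG.quotient_center)

end IsRootClass

/-- every root class `K` contains all finitely generated torsion-free
nilpotent groups, or there is a prime `p` such that `K` contains all finite `p`-groups. -/
theorem rootClass_contains_nilpotent_or_pGroups (K : GroupClass.{u}) (hK : IsRootClass K) :
    (∀ (G : Type u) [Group G],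
      Group.FG G → (∀ g : G, g ≠ 1 → ¬IsOfFinOrder g) → Group.IsNilpotent G → K G) ∨
    (∃ p : ℕ, p.Prime ∧ ∀ (G : Type u) [Group G], Finite G → IsPGroup p G → K G) := by
  obtain ⟨G₀, _, _, hG₀⟩ := hK.2.1
  obtain ⟨g, hg⟩ := exists_ne (1 : G₀)
  by_cases hfin : IsOfFinOrder g
  · right
    set p := (orderOf g).minFac
    have hp : p.Prime := Nat.minFac_prime (by simpa using hg)
    have := Fact.mk hp
    have hcard : Nat.card (zpowers (g ^ (orderOf g / p))) = p := by
      rw [Nat.card_zpowers, orderOf_pow_orderOf_div hfin.orderOf_pos.ne' (Nat.minFac_dvd _)]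
    exact ⟨p, hp, fun G _ _ hG => hK.of_isPGroup (hK.subgroup hG₀ _) hcard hG⟩
  · left
    have : Infinite (zpowers g) := (infinite_zpowers.mpr hfin).to_subtype
    exact fun G _ _ hG _ => hK.of_isNilpotent (hK.subgroup hG₀ (zpowers g)) hG
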